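/- Let B be a simple bipartite graph with bipartition V(B) = W ⊎ U, let G be its half-square, and let k be a positive integer such that G has k pairwise vertex-disjoint cycles. Let 𝒞 ∈ 𝒮, and write 𝒞 = 𝒞_1 ⊎ 𝒞_2, where 𝒞_1 is the set of cycles of 𝒞 that are triangles with all three vertices in a single special clique of G and 𝒞_2 = 𝒞 ∖ 𝒞_1. Let K_1 and K_2 be special cliques of G. Then there do not exist two distinct vertices u, v ∈ V(𝒞_2) ∩ K_1 ∩ K_2 and four edges e_1, e_2, e_3, e_4 of E(𝒞_2) such that e_1, e_2 ∈ E(K_1), e_3, e_4 ∈ E(K_2), u is incident with e_1 and e_3, and v is incident with e_2 and e_4. -/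

import Mathlib

open SimpleGraph

section Defs

variable {V : Type*} {ι : Type*}

/-- `W, U` is a bipartition of the simple graph `B`. -/
def IsBipartition (B : SimpleGraph V) (W U : Set V) : Prop :=
  (∀ v, v ∈ W ∨ v ∈ U) ∧ (∀ v, ¬(v ∈ W ∧ v ∈ U)) ∧
    ∀ ⦃a b⦄, B.Adj a b → (a ∈ W ∧ b ∈ U) ∨ (a ∈ U ∧ b ∈ W)

/-- The half-square of `B` on side `W`: two distinct vertices of `W` are adjacent
iff they have a common neighbor in `B`. -/
def halfSquare (B : SimpleGraph V) (W : Set V) : SimpleGraph V where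
  Adj a b := a ≠ b ∧ a ∈ W ∧ b ∈ W ∧ ∃ s, B.Adj a s ∧ B.Adj b s
  symm := by
    constructor
    rintro a b ⟨hne, ha, hb, s, h1, h2⟩
    exact ⟨hne.symm, hb, ha, s, h2, h1⟩
  loopless := by constructor; rintro a ⟨hne, _⟩; exact hne rfl

/-- Tree decomposition of the graph `H` with vertex set `S`, over the tree `T`. -/
structure IsTreeDecompOn (H : SimpleGraph V) (S : Set V) (T : SimpleGraph ι)
    (β : ι → Set V) : Prop where
  covers : ∀ v ∈ S, ∃ t, v ∈ β t
  edge_mem : ∀ ⦃u v⦄, H.Adj u v → ∃ t, u ∈ β t ∧ v ∈ β t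
  conn : ∀ v ∈ S, (T.induce {t | v ∈ β t}).Connected

/-- `t'` is a descendant of `t` (inclusively) in the tree `T` rooted at `r`:
`t` lies on every path from `t'` to the root. -/
def Desc (T : SimpleGraph ι) (r : ι) (t t' : ι) : Prop :=
  ∀ p : T.Walk t' r, p.IsPath → t ∈ p.support

/-- `γ(t)`: union of the bags of `t` and of all its descendants. -/
def gammaSet (T : SimpleGraph ι) (r : ι) (β : ι → Set V) (t : ι) : Set V :=
  ⋃ t' ∈ {t' | Desc T r t t'}, β t'

/-- The bag of the derived decomposition. -/
def derivedBag (B : SimpleGraph V) (W U : Set V) (T : SimpleGraph ι) (r : ι)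
    (β : ι → Set V) (t : ι) : Set V :=
  (β t ∩ W) ∪ ⋃ s ∈ β t ∩ U, B.neighborSet s ∩ gammaSet T r β t

def originalSet (B : SimpleGraph V) (W U : Set V) (T : SimpleGraph ι) (r : ι)
    (β : ι → Set V) (t : ι) : Set V :=
  β t ∩ derivedBag B W U T r β t

def fakeSet (B : SimpleGraph V) (W U : Set V) (T : SimpleGraph ι) (r : ι)
    (β : ι → Set V) (t : ι) : Set V :=
  derivedBag B W U T r β t \ β t

def cliquesAt (B : SimpleGraph V) (U : Set V) (β : ι → Set V) (t : ι) : Set (Set V) :=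
  {K | ∃ s ∈ β t ∩ U, K = B.neighborSet s}

def IsChild (T : SimpleGraph ι) (r : ι) (t t' : ι) : Prop :=
  T.Adj t t' ∧ Desc T r t t'

def IsLeafNode (T : SimpleGraph ι) (r : ι) (β : ι → Set V) (t : ι) : Prop :=
  (∀ t', ¬ IsChild T r t t') ∧ β t = ∅

def IsForgetNode (T : SimpleGraph ι) (r : ι) (β : ι → Set V) (w : V) (t : ι) : Prop :=
  ∃ t', IsChild T r t t' ∧ (∀ t'', IsChild T r t t'' → t'' = t') ∧
    w ∈ β t' ∧ β t = β t' \ {w}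

def IsIntroduceNode (T : SimpleGraph ι) (r : ι) (β : ι → Set V) (w : V) (t : ι) : Prop :=
  ∃ t', IsChild T r t t' ∧ (∀ t'', IsChild T r t t'' → t'' = t') ∧
    w ∈ β t ∧ β t \ {w} = β t'

def IsJoinNode (T : SimpleGraph ι) (r : ι) (β : ι → Set V) (t : ι) : Prop :=
  ∃ t₁ t₂, t₁ ≠ t₂ ∧ IsChild T r t t₁ ∧ IsChild T r t t₂ ∧
    (∀ t'', IsChild T r t t'' → t'' = t₁ ∨ t'' = t₂) ∧ β t = β t₁ ∧ β t = β t₂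

/-- A nice (rooted) tree decomposition. -/
def IsNice (T : SimpleGraph ι) (r : ι) (β : ι → Set V) : Prop :=
  β r = ∅ ∧ ∀ t, IsLeafNode T r β t ∨ (∃ w, IsForgetNode T r β w t) ∨
    (∃ w, IsIntroduceNode T r β w t) ∨ IsJoinNode T r β t

/-- `E(X)`: edges of `G` with both endpoints in `X`. -/
def edgesIn (G : SimpleGraph V) (X : Set V) : Set (Sym2 V) :=
  {e | e ∈ G.edgeSet ∧ ∀ x ∈ e, x ∈ X}

end Defs

section Packing

variable {V : Type*}

/-- A family of `k` pairwise vertex-disjoint cycles in `G`. -/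
def IsCyclePacking (G : SimpleGraph V) (k : ℕ) (w : Fin k → V)
    (c : ∀ i, G.Walk (w i) (w i)) : Prop :=
  (∀ i, (c i).IsCycle) ∧
    ∀ i j, i ≠ j → ∀ x, x ∈ (c i).support → x ∉ (c j).support

/-- Every cycle of the family is an induced cycle of `G`. -/
def IsInducedFamily (G : SimpleGraph V) {k : ℕ} {w : Fin k → V}
    (c : ∀ i, G.Walk (w i) (w i)) : Prop :=
  ∀ i, ∀ x ∈ (c i).support, ∀ y ∈ (c i).support, G.Adj x y → s(x, y) ∈ (c i).edges

/-- A cycle is a triangle with all its vertices in a single special clique. -/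
def IsSpecialTriangle (B : SimpleGraph V) (U : Set V) {G : SimpleGraph V} {w : V}
    (c : G.Walk w w) : Prop :=
  c.length = 3 ∧ ∃ s₀ ∈ U, ∀ x ∈ c.support, x ∈ B.neighborSet s₀

/-- The number of cycles of the family that are triangles inside special cliques. -/
noncomputable def triCount (B : SimpleGraph V) (U : Set V) {G : SimpleGraph V}
    {k : ℕ} {w : Fin k → V} (c : ∀ i, G.Walk (w i) (w i)) : ℕ :=
  {i | IsSpecialTriangle B U (c i)}.ncard

/-- Membership in `𝒮`: a `k`-solution consisting of induced cycles of the
half-square that maximizes the number of triangles from special cliques among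
all such `k`-solutions. -/
def InOptS (B : SimpleGraph V) (W U : Set V) (k : ℕ) (w : Fin k → V)
    (c : ∀ i, (halfSquare B W).Walk (w i) (w i)) : Prop :=
  IsCyclePacking (halfSquare B W) k w c ∧ IsInducedFamily (halfSquare B W) c ∧
    ∀ (w' : Fin k → V) (c' : ∀ i, (halfSquare B W).Walk (w' i) (w' i)),
      IsCyclePacking (halfSquare B W) k w' c' → IsInducedFamily (halfSquare B W) c' →
        triCount B U c' ≤ triCount B U c

end Packing

/-!
Let `u` lie on the cycle `C` and `v` on the cycle `D` of `𝒞₂`, with `e₁ = ua`, `e₃ = ua'` on `C`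
and `e₂ = vb`, `e₄ = vb'` on `D`. If `C = D`, then `u` and `v` are adjacent (both lie in `K₁`), so
`uv` is an edge of the induced cycle `C`; as `u` and `v` have degree two on `C`, `uv` is one of
`e₁, e₃` and one of `e₂, e₄`, so two of the four edges coincide. If `C ≠ D`, replacing `C` and `D`
by the triangles `uab ⊆ K₁` and `va'b' ⊆ K₂`, which are disjoint and use only vertices of `C ∪ D`,
gives a `k`-solution of induced cycles with one more special triangle than `𝒞`.
-/

namespace SimpleGraph.Walk

variable {V : Type*} {G : SimpleGraph V}

lemma IsCycle.eq_or_eq_of_mem_edges {z u a b d : V} {c : G.Walk z z} (hc : c.IsCycle)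
    (ha : s(u, a) ∈ c.edges) (hb : s(u, b) ∈ c.edges) (hd : s(u, d) ∈ c.edges) (hab : a ≠ b) :
    d = a ∨ d = b := by
  have hu : u ∈ c.support := c.fst_mem_support_of_mem_edges ha
  obtain ⟨x, y, -, hxy⟩ := Set.ncard_eq_two.mp (hc.ncard_neighborSet_toSubgraph_eq_two hu)
  have hmem : ∀ {e}, s(u, e) ∈ c.edges → e = x ∨ e = y := fun {e} he => by
    have : e ∈ c.toSubgraph.neighborSet u := adj_toSubgraph_iff_mem_edges.mpr he
    simpa [hxy] using this
  rcases hmem ha with rfl | rfl <;> rcases hmem hb with rfl | rfl <;>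
    rcases hmem hd with rfl | rfl <;> simp_all

lemma IsCycle.false_of_forks {z u v a a' b b' : V} {c : G.Walk z z} (hc : c.IsCycle)
    (huv : s(u, v) ∈ c.edges) (ha : s(u, a) ∈ c.edges) (ha' : s(u, a') ∈ c.edges)
    (hb : s(v, b) ∈ c.edges) (hb' : s(v, b') ∈ c.edges) (haa' : a ≠ a') (hbb' : b ≠ b')
    (hab : s(u, a) ≠ s(v, b)) (hab' : s(u, a) ≠ s(v, b')) (ha'b : s(u, a') ≠ s(v, b))
    (ha'b' : s(u, a') ≠ s(v, b')) : False := by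
  have hvu : s(v, u) ∈ c.edges := Sym2.eq_swap ▸ huv
  rcases hc.eq_or_eq_of_mem_edges hb hb' hvu hbb' with rfl | rfl <;>
    rcases hc.eq_or_eq_of_mem_edges ha ha' huv haa' with rfl | rfl <;>
    simp [Sym2.eq_swap] at *

def triangle {x y z : V} (hxy : G.Adj x y) (hyz : G.Adj y z) (hzx : G.Adj z x) : G.Walk x x :=
  cons hxy (cons hyz (cons hzx nil))

variable {x y z : V} (hxy : G.Adj x y) (hyz : G.Adj y z) (hzx : G.Adj z x)

@[simp]
lemma support_triangle : (triangle hxy hyz hzx).support = [x, y, z, x] := rfl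

@[simp]
lemma edges_triangle : (triangle hxy hyz hzx).edges = [s(x, y), s(y, z), s(z, x)] := rfl

lemma isCycle_triangle : (triangle hxy hyz hzx).IsCycle := by
  simp [triangle, cons_isCycle_iff, hxy.ne, hyz.ne, hzx.ne, hxy.ne.symm, hzx.ne.symm]

lemma isChordless_triangle : (triangle hxy hyz hzx).IsChordless := by
  refine isChordless_iff_forall_mem_edges.mpr fun p q hp hq hpq => ?_
  have := hpq.ne
  simp only [support_triangle, List.mem_cons, List.not_mem_nil, or_false] at hp hq
  rcases hp with rfl | rfl | rfl | rfl <;> rcases hq with rfl | rfl | rfl | rfl <;>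
    simp_all [Sym2.eq_swap]

end SimpleGraph.Walk

section HalfSquare

variable {V : Type*} {B : SimpleGraph V} {W : Set V} {x y s : V}

lemma mem_of_halfSquare_adj (h : (halfSquare B W).Adj x y) : x ∈ W ∧ y ∈ W :=
  ⟨h.2.1, h.2.2.1⟩

lemma halfSquare_adj_of_mem_neighborSet (hx : x ∈ W) (hy : y ∈ W) (hxy : x ≠ y)
    (hxs : x ∈ B.neighborSet s) (hys : y ∈ B.neighborSet s) : (halfSquare B W).Adj x y :=
  ⟨hxy, hx, hy, s, B.adj_symm hxs, B.adj_symm hys⟩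

end HalfSquare

section Exchange

variable {V : Type*} {G : SimpleGraph V} {k : ℕ} {w : Fin k → V}

lemma isInducedFamily_iff {c : ∀ i, G.Walk (w i) (w i)} :
    IsInducedFamily G c ↔ ∀ i, (c i).IsChordless := by
  simp only [IsInducedFamily, Walk.isChordless_iff_forall_mem_edges]
  grind

lemma IsCyclePacking.eq_of_mem_edges {c : ∀ i, G.Walk (w i) (w i)}
    (hc : IsCyclePacking G k w c) {i j : Fin k} {v x y : V} (hi : s(v, x) ∈ (c i).edges)
    (hj : s(v, y) ∈ (c j).edges) : i = j := by
  by_contra hij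
  exact hc.2 i j hij v ((c i).fst_mem_support_of_mem_edges hi)
    ((c j).fst_mem_support_of_mem_edges hj)

/-- Sigma-valued, since the replacement cycles have other base points than `w i₀`, `w j₀`. -/
def exchangeTwo (c : ∀ i, G.Walk (w i) (w i)) (i₀ j₀ : Fin k) {x y : V} (p : G.Walk x x)
    (q : G.Walk y y) : Fin k → Σ z, G.Walk z z :=
  Function.update (Function.update (fun i => ⟨w i, c i⟩) i₀ ⟨x, p⟩) j₀ ⟨y, q⟩

variable (c : ∀ i, G.Walk (w i) (w i)) {i₀ j₀ : Fin k} {x y : V} (p : G.Walk x x) (q : G.Walk y y)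

lemma exchangeTwo_cases (hij : i₀ ≠ j₀) (i : Fin k) :
    (i = i₀ ∧ exchangeTwo c i₀ j₀ p q i = ⟨x, p⟩) ∨ (i = j₀ ∧ exchangeTwo c i₀ j₀ p q i = ⟨y, q⟩) ∨
      (i ≠ i₀ ∧ i ≠ j₀ ∧ exchangeTwo c i₀ j₀ p q i = ⟨w i, c i⟩) := by
  unfold exchangeTwo
  by_cases hj : i = j₀
  · subst hj; simp
  by_cases hi : i = i₀
  · subst hi; simp [hj]
  · simp [hi, hj]

variable {P : ∀ {z : V}, G.Walk z z → Prop}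

lemma forall_exchangeTwo (hij : i₀ ≠ j₀) (hc : ∀ i, P (c i)) (hp : P p) (hq : P q) (i : Fin k) :
    P (exchangeTwo c i₀ j₀ p q i).2 := by
  rcases exchangeTwo_cases c p q hij i with ⟨-, h⟩ | ⟨-, h⟩ | ⟨-, -, h⟩ <;> rw [h]
  exacts [hp, hq, hc i]

lemma mem_support_exchangeTwo (hij : i₀ ≠ j₀) {i : Fin k} {v : V}
    (hv : v ∈ (exchangeTwo c i₀ j₀ p q i).2.support) :
    (i = i₀ ∧ v ∈ p.support) ∨ (i = j₀ ∧ v ∈ q.support) ∨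
      (i ≠ i₀ ∧ i ≠ j₀ ∧ v ∈ (c i).support) := by
  rcases exchangeTwo_cases c p q hij i with ⟨h₁, h⟩ | ⟨h₁, h⟩ | ⟨h₁, h₂, h⟩ <;> rw [h] at hv
  exacts [Or.inl ⟨h₁, hv⟩, Or.inr (Or.inl ⟨h₁, hv⟩), Or.inr (Or.inr ⟨h₁, h₂, hv⟩)]

lemma IsCyclePacking.exchangeTwo (hc : IsCyclePacking G k w c) (hij : i₀ ≠ j₀) (hp : p.IsCycle)
    (hq : q.IsCycle) (hpsub : ∀ v ∈ p.support, v ∈ (c i₀).support ∨ v ∈ (c j₀).support)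
    (hqsub : ∀ v ∈ q.support, v ∈ (c i₀).support ∨ v ∈ (c j₀).support)
    (hpq : ∀ v ∈ p.support, v ∉ q.support) :
    IsCyclePacking G k (fun i => (exchangeTwo c i₀ j₀ p q i).1)
      (fun i => (exchangeTwo c i₀ j₀ p q i).2) := by
  refine ⟨forall_exchangeTwo c p q (P := fun d => d.IsCycle) hij hc.1 hp hq, ?_⟩
  have hsep : ∀ {j v}, j ≠ i₀ → j ≠ j₀ → v ∈ (c j).support →
      v ∈ (c i₀).support ∨ v ∈ (c j₀).support → False := by
    rintro j v hj₁ hj₂ hv (h | h)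
    exacts [hc.2 _ _ hj₁ v hv h, hc.2 _ _ hj₂ v hv h]
  intro i j hne v hi hj
  rcases mem_support_exchangeTwo c p q hij hi with ⟨rfl, hvi⟩ | ⟨rfl, hvi⟩ | ⟨hi₁, hi₂, hvi⟩ <;>
    rcases mem_support_exchangeTwo c p q hij hj with ⟨rfl, hvj⟩ | ⟨rfl, hvj⟩ | ⟨hj₁, hj₂, hvj⟩
  · exact hne rfl
  · exact hpq v hvi hvj
  · exact hsep hj₁ hj₂ hvj (hpsub v hvi)
  · exact hpq v hvj hvi
  · exact hne rfl
  · exact hsep hj₁ hj₂ hvj (hqsub v hvi)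
  · exact hsep hi₁ hi₂ hvi (hpsub v hvj)
  · exact hsep hi₁ hi₂ hvi (hqsub v hvj)
  · exact hc.2 i j hne v hvi hvj

end Exchange

section Optimality

variable {V : Type*} {B : SimpleGraph V} {U : Set V} {G : SimpleGraph V} {k : ℕ}

lemma triCount_lt_triCount {w w' : Fin k → V} {c : ∀ i, G.Walk (w i) (w i)}
    {c' : ∀ i, G.Walk (w' i) (w' i)}
    (hsub : ∀ i, IsSpecialTriangle B U (c i) → IsSpecialTriangle B U (c' i)) {i : Fin k}
    (hi : ¬ IsSpecialTriangle B U (c i)) (hi' : IsSpecialTriangle B U (c' i)) :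
    triCount B U c < triCount B U c' :=
  Set.ncard_lt_ncard ((Set.ssubset_iff_of_subset hsub).mpr ⟨i, hi', hi⟩)

variable {W : Set V} {w : Fin k → V} {c : ∀ i, (halfSquare B W).Walk (w i) (w i)}

lemma InOptS.false_of_exchangeTwo (hS : InOptS B W U k w c) {i₀ j₀ : Fin k} (hij : i₀ ≠ j₀)
    (hi₀ : ¬ IsSpecialTriangle B U (c i₀)) (hj₀ : ¬ IsSpecialTriangle B U (c j₀)) {x y : V}
    {p : (halfSquare B W).Walk x x} {q : (halfSquare B W).Walk y y}
    (hp : p.IsCycle) (hq : q.IsCycle)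
    (hpch : p.IsChordless) (hqch : q.IsChordless)
    (hpsub : ∀ v ∈ p.support, v ∈ (c i₀).support ∨ v ∈ (c j₀).support)
    (hqsub : ∀ v ∈ q.support, v ∈ (c i₀).support ∨ v ∈ (c j₀).support)
    (hpq : ∀ v ∈ p.support, v ∉ q.support) (hpT : IsSpecialTriangle B U p) : False := by
  obtain ⟨hpack, hind, hopt⟩ := hS
  have hpack' := hpack.exchangeTwo c p q hij hp hq hpsub hqsub hpq
  have hind' : IsInducedFamily (halfSquare B W) (fun i => (exchangeTwo c i₀ j₀ p q i).2) :=
    isInducedFamily_iff.mpr <| forall_exchangeTwo c p q (P := fun d => d.IsChordless) hij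
      (isInducedFamily_iff.mp hind) hpch hqch
  have hsub : ∀ i, IsSpecialTriangle B U (c i) →
      IsSpecialTriangle B U (exchangeTwo c i₀ j₀ p q i).2 := by
    intro i hi
    rcases exchangeTwo_cases c p q hij i with ⟨rfl, -⟩ | ⟨rfl, -⟩ | ⟨-, -, h⟩
    exacts [absurd hi hi₀, absurd hi hj₀, h ▸ hi]
  have hnew : IsSpecialTriangle B U (exchangeTwo c i₀ j₀ p q i₀).2 := by
    rcases exchangeTwo_cases c p q hij i₀ with ⟨-, h⟩ | ⟨h, -⟩ | ⟨h, -⟩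
    exacts [h ▸ hpT, absurd h hij, absurd rfl h]
  exact (hopt _ _ hpack' hind').not_gt (triCount_lt_triCount hsub hi₀ hnew)

end Optimality

section Forks

variable {V : Type*} {B : SimpleGraph V} {W U : Set V} {k : ℕ} {w : Fin k → V}
  {c : ∀ i, (halfSquare B W).Walk (w i) (w i)}

lemma InOptS.false_of_forks_of_ne (hS : InOptS B W U k w c) {s₁ s₂ : V} (hs₁ : s₁ ∈ U)
    {i j : Fin k} (hij : i ≠ j) (hi : ¬ IsSpecialTriangle B U (c i))
    (hj : ¬ IsSpecialTriangle B U (c j)) {u v a a' b b' : V}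
    (ha : s(u, a) ∈ (c i).edges) (ha' : s(u, a') ∈ (c i).edges)
    (hb : s(v, b) ∈ (c j).edges) (hb' : s(v, b') ∈ (c j).edges) (haa' : a ≠ a') (hbb' : b ≠ b')
    (hu₁ : u ∈ B.neighborSet s₁) (ha₁ : a ∈ B.neighborSet s₁) (hb₁ : b ∈ B.neighborSet s₁)
    (hv₂ : v ∈ B.neighborSet s₂) (ha'₂ : a' ∈ B.neighborSet s₂)
    (hb'₂ : b' ∈ B.neighborSet s₂) : False := by
  have hsep : ∀ {x y}, x ∈ (c i).support → y ∈ (c j).support → x ≠ y := by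
    rintro x _ hx hy rfl
    exact hS.1.2 i j hij x hx hy
  have hua := (c i).adj_of_mem_edges ha
  have hua' := (c i).adj_of_mem_edges ha'
  have hvb := (c j).adj_of_mem_edges hb
  have hvb' := (c j).adj_of_mem_edges hb'
  have hu := (c i).fst_mem_support_of_mem_edges ha
  have haS := (c i).snd_mem_support_of_mem_edges ha
  have ha'S := (c i).snd_mem_support_of_mem_edges ha'
  have hv := (c j).fst_mem_support_of_mem_edges hb
  have hbS := (c j).snd_mem_support_of_mem_edges hb
  have hb'S := (c j).snd_mem_support_of_mem_edges hb'
  have hab := halfSquare_adj_of_mem_neighborSet (mem_of_halfSquare_adj hua).2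
    (mem_of_halfSquare_adj hvb).2 (hsep haS hbS) ha₁ hb₁
  have hbu := halfSquare_adj_of_mem_neighborSet (mem_of_halfSquare_adj hvb).2
    (mem_of_halfSquare_adj hua).1 (hsep hu hbS).symm hb₁ hu₁
  have hva' := halfSquare_adj_of_mem_neighborSet (mem_of_halfSquare_adj hvb).1
    (mem_of_halfSquare_adj hua').2 (hsep ha'S hv).symm hv₂ ha'₂
  have ha'b' := halfSquare_adj_of_mem_neighborSet (mem_of_halfSquare_adj hua').2
    (mem_of_halfSquare_adj hvb').2 (hsep ha'S hb'S) ha'₂ hb'₂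
  refine hS.false_of_exchangeTwo hij hi hj (Walk.isCycle_triangle hua hab hbu)
    (Walk.isCycle_triangle hva' ha'b' hvb'.symm) (Walk.isChordless_triangle _ _ _)
    (Walk.isChordless_triangle _ _ _) ?_ ?_ ?_ ⟨rfl, s₁, hs₁, ?_⟩
  · simp only [Walk.support_triangle, List.mem_cons, List.not_mem_nil, or_false]
    rintro x (rfl | rfl | rfl | rfl) <;> simp [hu, haS, hbS]
  · simp only [Walk.support_triangle, List.mem_cons, List.not_mem_nil, or_false]
    rintro x (rfl | rfl | rfl | rfl) <;> simp [hv, ha'S, hb'S]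
  · simp only [Walk.support_triangle, List.mem_cons, List.not_mem_nil, or_false]
    rintro x (rfl | rfl | rfl | rfl) <;>
      simp [hsep hu hv, hua'.ne, hsep hu hb'S, hsep haS hv, haa', hsep haS hb'S,
        hvb.ne.symm, (hsep ha'S hbS).symm, hbb']
  · simp only [Walk.support_triangle, List.mem_cons, List.not_mem_nil, or_false]
    rintro x (rfl | rfl | rfl | rfl) <;> assumption

end Forks

theorem stmt_15_general {V : Type*} (B : SimpleGraph V) (W U : Set V) (k : ℕ)
    (w : Fin k → V) (c : ∀ i, (halfSquare B W).Walk (w i) (w i))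
    (hS : InOptS B W U k w c) (s₁ s₂ : V) (hs₁ : s₁ ∈ U) :
    ¬ ∃ (u v : V) (e₁ e₂ e₃ e₄ : Sym2 V),
        u ≠ v ∧
        u ∈ (⋃ i ∈ {i | ¬ IsSpecialTriangle B U (c i)}, {x | x ∈ (c i).support}) ∧
        v ∈ (⋃ i ∈ {i | ¬ IsSpecialTriangle B U (c i)}, {x | x ∈ (c i).support}) ∧
        u ∈ B.neighborSet s₁ ∧ u ∈ B.neighborSet s₂ ∧
        v ∈ B.neighborSet s₁ ∧ v ∈ B.neighborSet s₂ ∧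
        e₁ ≠ e₂ ∧ e₁ ≠ e₃ ∧ e₁ ≠ e₄ ∧ e₂ ≠ e₃ ∧ e₂ ≠ e₄ ∧ e₃ ≠ e₄ ∧
        e₁ ∈ (⋃ i ∈ {i | ¬ IsSpecialTriangle B U (c i)}, {e | e ∈ (c i).edges}) ∧
        e₂ ∈ (⋃ i ∈ {i | ¬ IsSpecialTriangle B U (c i)}, {e | e ∈ (c i).edges}) ∧
        e₃ ∈ (⋃ i ∈ {i | ¬ IsSpecialTriangle B U (c i)}, {e | e ∈ (c i).edges}) ∧
        e₄ ∈ (⋃ i ∈ {i | ¬ IsSpecialTriangle B U (c i)}, {e | e ∈ (c i).edges}) ∧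
        e₁ ∈ edgesIn (halfSquare B W) (B.neighborSet s₁) ∧
        e₂ ∈ edgesIn (halfSquare B W) (B.neighborSet s₁) ∧
        e₃ ∈ edgesIn (halfSquare B W) (B.neighborSet s₂) ∧
        e₄ ∈ edgesIn (halfSquare B W) (B.neighborSet s₂) ∧
        u ∈ e₁ ∧ u ∈ e₃ ∧ v ∈ e₂ ∧ v ∈ e₄ := by
  rintro ⟨u, v, e₁, e₂, e₃, e₄, huv, -, -, hu₁, -, hv₁, hv₂, h12, h13, h14, h23, h24, h34,
    he₁, he₂, he₃, he₄, hE₁, hE₂, hE₃, hE₄, hue₁, hue₃, hve₂, hve₄⟩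
  obtain ⟨a, rfl⟩ := Sym2.mem_iff_exists.mp hue₁
  obtain ⟨b, rfl⟩ := Sym2.mem_iff_exists.mp hve₂
  obtain ⟨a', rfl⟩ := Sym2.mem_iff_exists.mp hue₃
  obtain ⟨b', rfl⟩ := Sym2.mem_iff_exists.mp hve₄
  simp only [Set.mem_iUnion, Set.mem_ofPred_eq, exists_prop] at he₁ he₂ he₃ he₄
  obtain ⟨i, hi, ha⟩ := he₁
  obtain ⟨j, hj, hb⟩ := he₂
  obtain ⟨i', -, ha'⟩ := he₃
  obtain ⟨j', -, hb'⟩ := he₄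
  obtain rfl : i = i' := hS.1.eq_of_mem_edges ha ha'
  obtain rfl : j = j' := hS.1.eq_of_mem_edges hb hb'
  have haa' : a ≠ a' := fun h => h13 (h ▸ rfl)
  have hbb' : b ≠ b' := fun h => h24 (h ▸ rfl)
  rcases eq_or_ne i j with rfl | hij
  · have hu := mem_of_halfSquare_adj ((c i).adj_of_mem_edges ha)
    have hv := mem_of_halfSquare_adj ((c i).adj_of_mem_edges hb)
    have huv' : s(u, v) ∈ (c i).edges := (isInducedFamily_iff.mp hS.2.1 i).mem_edges
      ((c i).fst_mem_support_of_mem_edges ha) ((c i).fst_mem_support_of_mem_edges hb)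
      (halfSquare_adj_of_mem_neighborSet hu.1 hv.1 huv hu₁ hv₁)
    exact (hS.1.1 i).false_of_forks huv' ha ha' hb hb' haa' hbb' h12 h14 h23.symm h34
  · exact hS.false_of_forks_of_ne hs₁ hij hi hj ha ha' hb hb' haa' hbb' hu₁
      (hE₁.2 a (Sym2.mem_mk_right u a)) (hE₂.2 b (Sym2.mem_mk_right v b)) hv₂
      (hE₃.2 a' (Sym2.mem_mk_right u a')) (hE₄.2 b' (Sym2.mem_mk_right v b'))

/-- for an optimal solution `𝒞 ∈ 𝒮` with non-special-triangle part
`𝒞₂`, and special cliques `K₁ = N_B(s₁)`, `K₂ = N_B(s₂)`, there do not exist two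
distinct vertices `u, v ∈ V(𝒞₂) ∩ K₁ ∩ K₂` and four distinct edges
`e₁, e₂ ∈ E(𝒞₂) ∩ E(K₁)`, `e₃, e₄ ∈ E(𝒞₂) ∩ E(K₂)` with `u` incident with
`e₁, e₃` and `v` incident with `e₂, e₄`. -/
theorem stmt_15 {V : Type*} [Fintype V] (B : SimpleGraph V) (W U : Set V)
    (hbip : IsBipartition B W U) (k : ℕ) (hk : 0 < k)
    (w : Fin k → V) (c : ∀ i, (halfSquare B W).Walk (w i) (w i))
    (hS : InOptS B W U k w c)
    (s₁ s₂ : V) (hs₁ : s₁ ∈ U) (hs₂ : s₂ ∈ U) :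
    ¬ ∃ (u v : V) (e₁ e₂ e₃ e₄ : Sym2 V),
        u ≠ v ∧
        u ∈ (⋃ i ∈ {i | ¬ IsSpecialTriangle B U (c i)}, {x | x ∈ (c i).support}) ∧
        v ∈ (⋃ i ∈ {i | ¬ IsSpecialTriangle B U (c i)}, {x | x ∈ (c i).support}) ∧
        u ∈ B.neighborSet s₁ ∧ u ∈ B.neighborSet s₂ ∧
        v ∈ B.neighborSet s₁ ∧ v ∈ B.neighborSet s₂ ∧
        e₁ ≠ e₂ ∧ e₁ ≠ e₃ ∧ e₁ ≠ e₄ ∧ e₂ ≠ e₃ ∧ e₂ ≠ e₄ ∧ e₃ ≠ e₄ ∧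
        e₁ ∈ (⋃ i ∈ {i | ¬ IsSpecialTriangle B U (c i)}, {e | e ∈ (c i).edges}) ∧
        e₂ ∈ (⋃ i ∈ {i | ¬ IsSpecialTriangle B U (c i)}, {e | e ∈ (c i).edges}) ∧
        e₃ ∈ (⋃ i ∈ {i | ¬ IsSpecialTriangle B U (c i)}, {e | e ∈ (c i).edges}) ∧
        e₄ ∈ (⋃ i ∈ {i | ¬ IsSpecialTriangle B U (c i)}, {e | e ∈ (c i).edges}) ∧
        e₁ ∈ edgesIn (halfSquare B W) (B.neighborSet s₁) ∧
        e₂ ∈ edgesIn (halfSquare B W) (B.neighborSet s₁) ∧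
        e₃ ∈ edgesIn (halfSquare B W) (B.neighborSet s₂) ∧
        e₄ ∈ edgesIn (halfSquare B W) (B.neighborSet s₂) ∧
        u ∈ e₁ ∧ u ∈ e₃ ∧ v ∈ e₂ ∧ v ∈ e₄ :=
  stmt_15_general B W U k w c hS s₁ s₂ hs₁
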